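/- Let R = ℤ[x₁, ..., x_n] and let t = ∏_{i=1}^n (1 − x_i). Suppose I ⊆ R is an ideal such that I + (1 − x_i) = R for every i = 1, ..., n. Then the contraction of I·R_t along R → R_t equals I. -/

import Mathlib

/-!
Coprimality of `I` with each `1 - xᵢ` passes to products and powers, so every power `t ^ k`
is a unit modulo `I`; hence `t ^ k * r ∈ I` forces `r ∈ I`, which is exactly membership in the
contraction of `I R_t`.
-/

open MvPolynomial

namespace Ideal

variable {R : Type*} [CommRing R]

theorem mem_of_mul_mem_of_isCoprime_span {I : Ideal R} {m r : R}
    (hm : IsCoprime I (span {m})) (hmr : m * r ∈ I) : r ∈ I := by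
  obtain ⟨a, ha, b, hb, hab⟩ := isCoprime_iff_exists.mp hm
  obtain ⟨c, rfl⟩ := mem_span_singleton'.mp hb
  have hr : r = r * a + c * (m * r) := by linear_combination (-r) * hab
  rw [hr]
  exact I.add_mem (I.mul_mem_left r ha) (I.mul_mem_left c hmr)

end Ideal

namespace IsLocalization

variable {R : Type*} [CommRing R] (M : Submonoid R) (S : Type*) [CommRing S] [Algebra R S]
  [IsLocalization M S]

theorem comap_map_eq_self_of_isCoprime {I : Ideal R}
    (hI : ∀ m ∈ M, IsCoprime I (Ideal.span {m})) :
    (I.map (algebraMap R S)).comap (algebraMap R S) = I := by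
  refine le_antisymm (fun r hr ↦ ?_) Ideal.le_comap_map
  obtain ⟨m, hm, hmr⟩ := (algebraMap_mem_map_algebraMap_iff M S I r).mp hr
  exact Ideal.mem_of_mul_mem_of_isCoprime_span (hI m hm) hmr

theorem Away.comap_map_eq_self_of_isCoprime {t : R} [IsLocalization.Away t S] {I : Ideal R}
    (hI : IsCoprime I (Ideal.span {t})) :
    (I.map (algebraMap R S)).comap (algebraMap R S) = I := by
  refine IsLocalization.comap_map_eq_self_of_isCoprime (Submonoid.powers t) S ?_
  rintro _ ⟨k, rfl⟩
  rw [← Ideal.span_singleton_pow]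
  exact hI.pow_right

end IsLocalization

theorem stmt_17 (n : ℕ) (I : Ideal (MvPolynomial (Fin n) ℤ))
    (h : ∀ i : Fin n, I + Ideal.span {1 - X i} = ⊤) :
    Ideal.comap
        (algebraMap (MvPolynomial (Fin n) ℤ)
          (Localization.Away (∏ i, (1 - X i : MvPolynomial (Fin n) ℤ))))
        (Ideal.map
          (algebraMap (MvPolynomial (Fin n) ℤ)
            (Localization.Away (∏ i, (1 - X i : MvPolynomial (Fin n) ℤ))))
          I) = I := by
  have hI : IsCoprime I (Ideal.span {∏ i, (1 - X i : MvPolynomial (Fin n) ℤ)}) := by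
    rw [← Ideal.prod_span_singleton]
    exact IsCoprime.prod_right fun i _ ↦ Ideal.isCoprime_iff_sup_eq.mpr (h i)
  exact IsLocalization.Away.comap_map_eq_self_of_isCoprime _ hI
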